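/- Let (a_n)_{n≥1} be a sequence of complex numbers and (X_n)_{n≥1} a sequence of complex-valued random variables with E(|X_n|²) = 1 for all n, and assume L := Σ_{n,m=1}^∞ |a_n| |a_m| |E(X_n · conj(X_m))| · log₂(n+1) · log₂(m+1) < ∞. Then the subsequence of dyadic partial sums S_{2^k} = Σ_{n=1}^{2^k} a_n X_n (k = 0, 1, 2, …) converges almost surely as k → ∞, and E( (sup_{k≥0} |S_{2^k}|)² ) ≤ 4 L. -/

import Mathlib

/-!
Group the terms into dyadic blocks `D j = ∑_{2^(j-1) < n ≤ 2^j} a n * X n`, so that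
`S_{2^k} = D 0 + ⋯ + D k` and `sup_k |S_{2^k}| ≤ ∑ j |D j|`. Cauchy–Schwarz with weights
`w j = max 1 (j - 1)` gives `(∑ j |D j|)² ≤ (∑ j w j⁻²) (∑ j w j² |D j|²)`, where
`∑ j w j⁻² = 2 + ζ(2) ≤ 4`. Expanding `E |D j|²` into the correlations `E (X n * conj (X m))` and
using `w j ≤ log₂ (n + 1)` on the `j`-th block bounds `∑ j w j² E |D j|²` by `L`. Finally,
`E (∑ j |D j|)² < ∞` makes `∑ j D j` converge absolutely almost surely.
-/

open MeasureTheory Filter Finset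
open scoped ENNReal ComplexConjugate

-- Since `2 ^ 0 / 2 = 0`, block `0` is `{1}`; block `j + 1` is `(2 ^ j, 2 ^ (j + 1)]`.
def dyadicBlock (j : ℕ) : Finset ℕ := Ioc (2 ^ j / 2) (2 ^ j)

-- The largest integer that is `≤ log₂ (n + 1)` for all `n` in block `j`.
def dyadicWeight (j : ℕ) : ℕ := max 1 (j - 1)

lemma dyadicBlock_subset_Icc {j k : ℕ} (hjk : j ≤ k) : dyadicBlock j ⊆ Icc 1 (2 ^ k) := by
  intro n hn
  rw [dyadicBlock, mem_Ioc] at hn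
  exact mem_Icc.2 ⟨by omega, hn.2.trans (Nat.pow_le_pow_right two_pos hjk)⟩

lemma one_le_of_mem_dyadicBlock {j n : ℕ} (hn : n ∈ dyadicBlock j) : 1 ≤ n :=
  (mem_Icc.1 (dyadicBlock_subset_Icc le_rfl hn)).1

lemma sum_range_sum_dyadicBlock {M : Type*} [AddCommMonoid M] (f : ℕ → M) (k : ℕ) :
    ∑ j ∈ range (k + 1), ∑ n ∈ dyadicBlock j, f n = ∑ n ∈ Icc 1 (2 ^ k), f n := by
  induction k with
  | zero => simp only [dyadicBlock, zero_add, sum_range_one, pow_zero]; rfl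
  | succ k ih =>
    rw [sum_range_succ, ih, dyadicBlock, pow_succ, Nat.mul_div_cancel _ two_pos,
      ← zero_add 1, Icc_add_one_left_eq_Ioc, Icc_add_one_left_eq_Ioc]
    exact sum_Ioc_consecutive f (Nat.zero_le _) (by omega)

lemma two_pow_dyadicWeight_le {j n : ℕ} (hn : n ∈ dyadicBlock j) :
    2 ^ dyadicWeight j ≤ n + 1 := by
  rw [dyadicBlock, mem_Ioc] at hn
  rcases Nat.lt_or_ge j 2 with hj | hj
  · rw [dyadicWeight, max_eq_left (by omega)]
    omega
  · obtain ⟨i, rfl⟩ : ∃ i, j = i + 1 := ⟨j - 1, by omega⟩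
    rw [dyadicWeight, max_eq_right (by omega), Nat.add_sub_cancel]
    rw [pow_succ, Nat.mul_div_cancel _ two_pos] at hn
    omega

lemma dyadicWeight_le_logb {j n : ℕ} (hn : n ∈ dyadicBlock j) :
    (dyadicWeight j : ℝ) ≤ Real.logb 2 (n + 1) := by
  rw [Real.le_logb_iff_rpow_le one_lt_two (by positivity), Real.rpow_natCast]
  exact_mod_cast two_pow_dyadicWeight_le hn

lemma tsum_inv_dyadicWeight_sq_le : ∑' j, (dyadicWeight j : ℝ≥0∞)⁻¹ ^ 2 ≤ 4 := by
  have htail : ∑' i : ℕ, ((i + 1 : ℕ) : ℝ≥0∞)⁻¹ ^ 2 ≤ 2 := by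
    refine ENNReal.tsum_le_of_sum_range_le fun N => ?_
    have h := sum_Ioo_inv_sq_le (α := ℝ) 0 (N + 1)
    rw [← Ico_add_one_left_eq_Ioo, sum_Ico_eq_sum_range] at h
    calc ∑ i ∈ range N, ((i + 1 : ℕ) : ℝ≥0∞)⁻¹ ^ 2
        = ENNReal.ofReal (∑ i ∈ range N, (((i + 1 : ℕ) : ℝ) ^ 2)⁻¹) := by
          rw [ENNReal.ofReal_sum_of_nonneg fun i _ => by positivity]
          refine sum_congr rfl fun i _ => ?_
          rw [ENNReal.ofReal_inv_of_pos (by positivity), ENNReal.ofReal_pow (by positivity),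
            ENNReal.ofReal_natCast, ENNReal.inv_pow]
      _ ≤ ENNReal.ofReal 2 := ENNReal.ofReal_le_ofReal (by simpa [add_comm] using h)
      _ = 2 := ENNReal.ofReal_ofNat 2
  rw [tsum_eq_zero_add' ENNReal.summable, tsum_eq_zero_add' ENNReal.summable]
  calc _ = 1 + (1 + ∑' i : ℕ, ((i + 1 : ℕ) : ℝ≥0∞)⁻¹ ^ 2) := by simp [dyadicWeight]
    _ ≤ 1 + (1 + 2) := by gcongr
    _ = 4 := by norm_num

lemma sum_Icc_one_le_tsum_pnat (f : ℕ → ℝ≥0∞) (N : ℕ) : ∑ n ∈ Icc 1 N, f n ≤ ∑' n : ℕ+, f n := by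
  rw [tsum_pnat_eq_tsum_succ, ← Ico_add_one_right_eq_Icc, sum_Ico_eq_sum_range,
    Nat.add_sub_cancel]
  simpa only [add_comm 1] using ENNReal.sum_le_tsum (range N)

lemma tsum_sum_dyadicBlock_le (H : ℕ → ℕ → ℝ≥0∞) :
    ∑' j, ∑ n ∈ dyadicBlock j, ∑ m ∈ dyadicBlock j, H n m ≤ ∑' (n : ℕ+) (m : ℕ+), H n m := by
  refine ENNReal.tsum_le_of_sum_range_le fun K => ?_
  rcases K with _ | k
  · simp
  calc ∑ j ∈ range (k + 1), ∑ n ∈ dyadicBlock j, ∑ m ∈ dyadicBlock j, H n m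
      ≤ ∑ j ∈ range (k + 1), ∑ n ∈ dyadicBlock j, ∑ m ∈ Icc 1 (2 ^ k), H n m := by
        gcongr with j hj
        exact dyadicBlock_subset_Icc (Nat.lt_succ_iff.1 (mem_range.1 hj))
    _ = ∑ n ∈ Icc 1 (2 ^ k), ∑ m ∈ Icc 1 (2 ^ k), H n m := sum_range_sum_dyadicBlock _ k
    _ ≤ ∑ n ∈ Icc 1 (2 ^ k), ∑' m : ℕ+, H n m := by
        gcongr with n
        exact sum_Icc_one_le_tsum_pnat _ _
    _ ≤ ∑' (n : ℕ+) (m : ℕ+), H n m := sum_Icc_one_le_tsum_pnat _ _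

lemma dyadicWeight_sq_mul_sum_sum_le (j : ℕ) {c : ℕ → ℕ → ℝ} (hc : ∀ n m, 0 ≤ c n m) :
    (dyadicWeight j : ℝ≥0∞) ^ 2 * ∑ n ∈ dyadicBlock j, ∑ m ∈ dyadicBlock j, ENNReal.ofReal (c n m) ≤
      ∑ n ∈ dyadicBlock j, ∑ m ∈ dyadicBlock j,
        ENNReal.ofReal (c n m * Real.logb 2 (n + 1) * Real.logb 2 (m + 1)) := by
  rw [mul_sum]
  gcongr with n hn
  rw [mul_sum]
  gcongr with m hm
  rw [← ENNReal.ofReal_natCast, ← ENNReal.ofReal_pow (by positivity),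
    ← ENNReal.ofReal_mul (by positivity)]
  refine ENNReal.ofReal_le_ofReal ?_
  calc (dyadicWeight j : ℝ) ^ 2 * c n m = c n m * dyadicWeight j * dyadicWeight j := by ring
    _ ≤ c n m * Real.logb 2 (n + 1) * Real.logb 2 (m + 1) := by
      have hw : (0 : ℝ) ≤ dyadicWeight j := Nat.cast_nonneg _
      have hn' := dyadicWeight_le_logb hn
      exact mul_le_mul (mul_le_mul_of_nonneg_left hn' (hc n m)) (dyadicWeight_le_logb hm) hw
        (mul_nonneg (hc n m) (hw.trans hn'))

lemma ENNReal.tsum_mul_sq_le_sq_mul_sq {ι : Type*} (f g : ι → ℝ≥0∞) :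
    (∑' i, f i * g i) ^ 2 ≤ (∑' i, f i ^ 2) * ∑' i, g i ^ 2 := by
  let _ : MeasurableSpace ι := ⊤
  have h := ENNReal.lintegral_mul_le_Lp_mul_Lq Measure.count Real.HolderConjugate.two_two
    (measurable_from_top (f := f)).aemeasurable (measurable_from_top (f := g)).aemeasurable
  simp only [lintegral_count, Pi.mul_apply, ENNReal.rpow_two] at h
  calc (∑' i, f i * g i) ^ 2
      ≤ ((∑' i, f i ^ 2) ^ (1 / 2 : ℝ) * (∑' i, g i ^ 2) ^ (1 / 2 : ℝ)) ^ 2 := by gcongr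
    _ = (∑' i, f i ^ 2) * ∑' i, g i ^ 2 := by
      rw [mul_pow, ← ENNReal.rpow_two, ← ENNReal.rpow_mul, ← ENNReal.rpow_two, ← ENNReal.rpow_mul]
      norm_num

section

variable {Ω : Type*} [MeasurableSpace Ω] {μ : Measure Ω}

lemma lintegral_tsum_sq_le {ι : Type*} [Countable ι] {F : ι → Ω → ℝ≥0∞}
    (hF : ∀ i, AEMeasurable (F i) μ) {w : ι → ℝ≥0∞} (hw₀ : ∀ i, w i ≠ 0) (hw : ∀ i, w i ≠ ∞) :
    ∫⁻ ω, (∑' i, F i ω) ^ 2 ∂μ ≤ (∑' i, (w i)⁻¹ ^ 2) * ∑' i, w i ^ 2 * ∫⁻ ω, F i ω ^ 2 ∂μ := by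
  have hF2 : ∀ i, AEMeasurable (fun ω => w i ^ 2 * F i ω ^ 2) μ :=
    fun i => ((hF i).pow_const 2).const_mul _
  calc ∫⁻ ω, (∑' i, F i ω) ^ 2 ∂μ
      ≤ ∫⁻ ω, (∑' i, (w i)⁻¹ ^ 2) * ∑' i, w i ^ 2 * F i ω ^ 2 ∂μ := by
        refine lintegral_mono fun ω => ?_
        simpa only [ENNReal.inv_mul_cancel_left (hw₀ _) (hw _), mul_pow] using
          ENNReal.tsum_mul_sq_le_sq_mul_sq (fun i => (w i)⁻¹) (fun i => w i * F i ω)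
    _ = (∑' i, (w i)⁻¹ ^ 2) * ∑' i, w i ^ 2 * ∫⁻ ω, F i ω ^ 2 ∂μ := by
        rw [lintegral_const_mul'' _ (AEMeasurable.tsum hF2), lintegral_tsum hF2]
        simp_rw [lintegral_const_mul'' _ ((hF _).pow_const 2)]

lemma ae_summable_of_lintegral_tsum_enorm_sq_ne_top {ι E : Type*} [Countable ι]
    [NormedAddCommGroup E] [CompleteSpace E] {D : ι → Ω → E}
    (hD : ∀ i, AEStronglyMeasurable (D i) μ) (h : ∫⁻ ω, (∑' i, ‖D i ω‖ₑ) ^ 2 ∂μ ≠ ∞) :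
    ∀ᵐ ω ∂μ, Summable fun i => D i ω := by
  filter_upwards [ae_lt_top' ((AEMeasurable.tsum fun i => (hD i).enorm).pow_const 2) h]
    with ω hω
  exact .of_norm (tsum_enorm_ne_top_iff_summable_norm.1
    ((ENNReal.pow_lt_top_iff.1 hω).resolve_right two_ne_zero).ne)

variable {ι 𝕜 : Type*} [RCLike 𝕜]

lemma MeasureTheory.MemLp.integrable_mul_conj {f g : Ω → 𝕜} (hf : MemLp f 2 μ)
    (hg : MemLp g 2 μ) : Integrable (fun ω => f ω * conj (g ω)) μ :=
  hf.integrable_mul hg.star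

lemma integral_sum_mul_conj_sum {s : Finset ι} {X : ι → Ω → 𝕜}
    (hX : ∀ i ∈ s, MemLp (X i) 2 μ) (c : ι → 𝕜) :
    ∫ ω, (∑ i ∈ s, c i * X i ω) * conj (∑ j ∈ s, c j * X j ω) ∂μ =
      ∑ i ∈ s, ∑ j ∈ s, c i * conj (c j) * ∫ ω, X i ω * conj (X j ω) ∂μ := by
  have hint : ∀ i ∈ s, ∀ j ∈ s,
      Integrable (fun ω => c i * conj (c j) * (X i ω * conj (X j ω))) μ :=
    fun i hi j hj => ((hX i hi).integrable_mul_conj (hX j hj)).const_mul _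
  calc ∫ ω, (∑ i ∈ s, c i * X i ω) * conj (∑ j ∈ s, c j * X j ω) ∂μ
      = ∫ ω, ∑ i ∈ s, ∑ j ∈ s, c i * conj (c j) * (X i ω * conj (X j ω)) ∂μ := by
        simp only [map_sum, map_mul, sum_mul_sum, mul_mul_mul_comm]
    _ = ∑ i ∈ s, ∑ j ∈ s, c i * conj (c j) * ∫ ω, X i ω * conj (X j ω) ∂μ := by
        rw [integral_finsetSum s fun i hi => integrable_finsetSum s (hint i hi)]
        refine sum_congr rfl fun i hi => ?_
        rw [integral_finsetSum s (hint i hi)]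
        simp_rw [integral_const_mul]

lemma lintegral_enorm_sum_sq_le {s : Finset ι} {X : ι → Ω → 𝕜}
    (hX : ∀ i ∈ s, MemLp (X i) 2 μ) (c : ι → 𝕜) :
    ∫⁻ ω, ‖∑ i ∈ s, c i * X i ω‖ₑ ^ 2 ∂μ ≤
      ∑ i ∈ s, ∑ j ∈ s, ENNReal.ofReal (‖c i‖ * ‖c j‖ * ‖∫ ω, X i ω * conj (X j ω) ∂μ‖) := by
  have hD : MemLp (fun ω => ∑ i ∈ s, c i * X i ω) 2 μ :=
    memLp_finsetSum s fun i hi => (hX i hi).const_mul (c i)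
  calc ∫⁻ ω, ‖∑ i ∈ s, c i * X i ω‖ₑ ^ 2 ∂μ
      = ENNReal.ofReal (∫ ω, ‖∑ i ∈ s, c i * X i ω‖ ^ 2 ∂μ) := by
        rw [ofReal_integral_eq_lintegral_ofReal ((memLp_two_iff_integrable_sq_norm hD.1).1 hD)
          (ae_of_all _ fun ω => by positivity)]
        simp_rw [ENNReal.ofReal_pow (norm_nonneg _), ofReal_norm]
    _ = ENNReal.ofReal (RCLike.re
          (∑ i ∈ s, ∑ j ∈ s, c i * conj (c j) * ∫ ω, X i ω * conj (X j ω) ∂μ)) := by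
        rw [← integral_sum_mul_conj_sum hX, ← integral_re (hD.integrable_mul_conj hD)]
        congr 1
        refine integral_congr_ae (ae_of_all _ fun ω => ?_)
        dsimp only
        rw [RCLike.mul_conj, ← RCLike.ofReal_pow, RCLike.ofReal_re]
    _ ≤ ENNReal.ofReal (∑ i ∈ s, ∑ j ∈ s, ‖c i‖ * ‖c j‖ * ‖∫ ω, X i ω * conj (X j ω) ∂μ‖) := by
        refine ENNReal.ofReal_le_ofReal ((RCLike.re_le_norm _).trans ?_)
        refine (norm_sum_le _ _).trans (sum_le_sum fun i _ => (norm_sum_le _ _).trans ?_)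
        simp [norm_mul]
    _ = ∑ i ∈ s, ∑ j ∈ s, ENNReal.ofReal (‖c i‖ * ‖c j‖ * ‖∫ ω, X i ω * conj (X j ω) ∂μ‖) := by
        rw [ENNReal.ofReal_sum_of_nonneg fun i _ => sum_nonneg fun j _ => by positivity]
        exact sum_congr rfl fun i _ => ENNReal.ofReal_sum_of_nonneg fun j _ => by positivity

lemma memLp_sum_dyadicBlock (a : ℕ → 𝕜) {X : ℕ → Ω → 𝕜} (hX : ∀ n, 1 ≤ n → MemLp (X n) 2 μ)
    (j : ℕ) : MemLp (fun ω => ∑ n ∈ dyadicBlock j, a n * X n ω) 2 μ :=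
  memLp_finsetSum _ fun n hn => (hX n (one_le_of_mem_dyadicBlock hn)).const_mul (a n)

lemma tsum_dyadicWeight_sq_mul_lintegral_le (a : ℕ → 𝕜) {X : ℕ → Ω → 𝕜}
    (hX : ∀ n, 1 ≤ n → MemLp (X n) 2 μ) :
    ∑' j, (dyadicWeight j : ℝ≥0∞) ^ 2 * ∫⁻ ω, ‖∑ n ∈ dyadicBlock j, a n * X n ω‖ₑ ^ 2 ∂μ ≤
      ∑' (n : ℕ+) (m : ℕ+), ENNReal.ofReal (‖a n‖ * ‖a m‖ * ‖∫ ω, X n ω * conj (X m ω) ∂μ‖ *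
        Real.logb 2 ((n : ℕ) + 1) * Real.logb 2 ((m : ℕ) + 1)) := by
  refine (ENNReal.tsum_le_tsum fun j => ?_).trans (tsum_sum_dyadicBlock_le fun n m =>
    ENNReal.ofReal (‖a n‖ * ‖a m‖ * ‖∫ ω, X n ω * conj (X m ω) ∂μ‖ *
      Real.logb 2 (n + 1) * Real.logb 2 (m + 1)))
  exact (mul_le_mul_right (lintegral_enorm_sum_sq_le
      (fun n hn => hX n (one_le_of_mem_dyadicBlock hn)) a) _).trans
    (dyadicWeight_sq_mul_sum_sum_le j fun n m => by positivity)

lemma lintegral_tsum_enorm_dyadicBlock_sq_le (a : ℕ → 𝕜) {X : ℕ → Ω → 𝕜}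
    (hX : ∀ n, 1 ≤ n → MemLp (X n) 2 μ) :
    ∫⁻ ω, (∑' j, ‖∑ n ∈ dyadicBlock j, a n * X n ω‖ₑ) ^ 2 ∂μ ≤
      4 * ∑' (n : ℕ+) (m : ℕ+), ENNReal.ofReal (‖a n‖ * ‖a m‖ * ‖∫ ω, X n ω * conj (X m ω) ∂μ‖ *
        Real.logb 2 ((n : ℕ) + 1) * Real.logb 2 ((m : ℕ) + 1)) := by
  calc ∫⁻ ω, (∑' j, ‖∑ n ∈ dyadicBlock j, a n * X n ω‖ₑ) ^ 2 ∂μ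
      ≤ (∑' j, (dyadicWeight j : ℝ≥0∞)⁻¹ ^ 2) * ∑' j, (dyadicWeight j : ℝ≥0∞) ^ 2 *
          ∫⁻ ω, ‖∑ n ∈ dyadicBlock j, a n * X n ω‖ₑ ^ 2 ∂μ :=
        lintegral_tsum_sq_le (fun j => (memLp_sum_dyadicBlock a hX j).1.enorm)
          (fun j => by simp [dyadicWeight])
          (fun j => ENNReal.natCast_ne_top _)
    _ ≤ _ := by
        gcongr
        exacts [tsum_inv_dyadicWeight_sq_le, tsum_dyadicWeight_sq_mul_lintegral_le a hX]

end

theorem dyadic_partial_sums_converge_general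
    {Ω : Type*} [MeasurableSpace Ω] (P : Measure Ω)
    (a : ℕ → ℂ) (X : ℕ → Ω → ℂ)
    (hmeas : ∀ n, 1 ≤ n → AEMeasurable (X n) P)
    (hnorm : ∀ n, 1 ≤ n → ∫ ω, ‖X n ω‖ ^ 2 ∂P = 1)
    (L : ℝ≥0∞)
    (hLdef : L = ∑' (n : ℕ+) (m : ℕ+),
      ENNReal.ofReal (‖a n‖ * ‖a m‖ * ‖∫ ω, X n ω * (starRingEnd ℂ) (X m ω) ∂P‖ *
        Real.logb 2 ((n : ℕ) + 1) * Real.logb 2 ((m : ℕ) + 1)))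
    (hL : L < ⊤) :
    (∀ᵐ ω ∂P, ∃ l : ℂ,
        Tendsto (fun k : ℕ => ∑ n ∈ Finset.Icc 1 (2 ^ k), a n * X n ω) atTop (nhds l)) ∧
      ∫⁻ ω, (⨆ k : ℕ, ENNReal.ofReal
          ‖∑ n ∈ Finset.Icc 1 (2 ^ k), a n * X n ω‖) ^ 2 ∂P ≤ 4 * L := by
  have hX : ∀ n, 1 ≤ n → MemLp (X n) 2 P := fun n hn =>
    (memLp_two_iff_integrable_sq_norm (hmeas n hn).aestronglyMeasurable).2
      (integrable_of_integral_eq_one (hnorm n hn))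
  set D : ℕ → Ω → ℂ := fun j ω => ∑ n ∈ dyadicBlock j, a n * X n ω
  have hS : ∀ k ω, ∑ n ∈ Icc 1 (2 ^ k), a n * X n ω = ∑ j ∈ range (k + 1), D j ω :=
    fun k ω => (sum_range_sum_dyadicBlock _ k).symm
  have hbound : ∫⁻ ω, (∑' j, ‖D j ω‖ₑ) ^ 2 ∂P ≤ 4 * L :=
    hLdef ▸ lintegral_tsum_enorm_dyadicBlock_sq_le a hX
  refine ⟨?_, ?_⟩
  · filter_upwards [ae_summable_of_lintegral_tsum_enorm_sq_ne_top
      (fun j => (memLp_sum_dyadicBlock a hX j).1)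
      (hbound.trans_lt (ENNReal.mul_lt_top (by norm_num) hL)).ne] with ω hω
    exact ⟨_, (hω.hasSum.tendsto_sum_nat.comp (tendsto_add_atTop_nat 1)).congr
      fun k => (hS k ω).symm⟩
  · refine (lintegral_mono fun ω => ?_).trans hbound
    gcongr
    refine iSup_le fun k => ?_
    rw [ofReal_norm, hS]
    exact (enorm_sum_le _ _).trans (ENNReal.sum_le_tsum _)

/-- Under the Menshov–Rademacher type condition `L < ∞`, the dyadic partial sums
`S_{2^k} = Σ_{n=1}^{2^k} a_n X_n` converge almost surely and
`E((sup_k |S_{2^k}|)²) ≤ 4 L`. -/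
theorem dyadic_partial_sums_converge
    {Ω : Type*} [MeasurableSpace Ω] (P : Measure Ω) [IsProbabilityMeasure P]
    (a : ℕ → ℂ) (X : ℕ → Ω → ℂ)
    (hmeas : ∀ n, 1 ≤ n → AEMeasurable (X n) P)
    (hnorm : ∀ n, 1 ≤ n → ∫ ω, ‖X n ω‖ ^ 2 ∂P = 1)
    (L : ℝ≥0∞)
    (hLdef : L = ∑' (n : ℕ+) (m : ℕ+),
      ENNReal.ofReal (‖a n‖ * ‖a m‖ * ‖∫ ω, X n ω * (starRingEnd ℂ) (X m ω) ∂P‖ *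
        Real.logb 2 ((n : ℕ) + 1) * Real.logb 2 ((m : ℕ) + 1)))
    (hL : L < ⊤) :
    (∀ᵐ ω ∂P, ∃ l : ℂ,
        Tendsto (fun k : ℕ => ∑ n ∈ Finset.Icc 1 (2 ^ k), a n * X n ω) atTop (nhds l)) ∧
      ∫⁻ ω, (⨆ k : ℕ, ENNReal.ofReal
          ‖∑ n ∈ Finset.Icc 1 (2 ^ k), a n * X n ω‖) ^ 2 ∂P ≤ 4 * L :=
  dyadic_partial_sums_converge_general P a X hmeas hnorm L hLdef hL
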